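/- arXiv:0907.0158 — 6 statements merged into one kernel-verified Lean document; each statement's English description precedes it below -/
import Mathlib

section
/- For coprime positive integers q and r, in the group algebra ℤ[ℚ/ℤ] we have F_q · F_r = F_{qr}, where F_n = ∑_{β ∈ ℚ/ℤ, ord(β) = n} single β, the sum of the group-algebra basis elements indexed by the elements of ℚ/ℤ of exact additive order n. -/
/-! `F n` is the sum of the points of exact order `n` of `ℚ/ℤ`. In any abelian group, for coprime
`q` and `r`, addition is a bijection from (points of order `q`) × (points of order `r`) onto the
points of order `q * r`: it is injective because a difference killed by both `q` and `r` vanishes,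
and surjective because Bézout's `a q + b r = 1` splits `z` as `(b r) • z + (a q) • z`. -/

noncomputable def F (n : ℕ) : AddMonoidAlgebra ℤ (AddCircle (1 : ℚ)) :=
  ∑ a ∈ (Finset.range n).filter (fun a => Nat.Coprime a n),
    AddMonoidAlgebra.single (((a : ℚ) / n : ℚ) : AddCircle (1 : ℚ)) 1

section CoprimeOrders

variable {G : Type*} [AddCommGroup G] {q r : ℕ}

theorem injOn_add_addOrderOf_eq_prod (h : q.Coprime r) :
    Set.InjOn (fun p : G × G => p.1 + p.2) ({x | addOrderOf x = q} ×ˢ {y | addOrderOf y = r}) := by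
  rintro ⟨x, y⟩ ⟨hx, hy⟩ ⟨x', y'⟩ ⟨hx', hy'⟩ hsum
  simp only [Set.mem_ofPred_eq] at hx hy hx' hy' hsum
  have hdiff : x - x' = y' - y := by rw [sub_eq_sub_iff_add_eq_add, hsum, add_comm]
  have hdvd_q : addOrderOf (x - x') ∣ q := addOrderOf_dvd_of_nsmul_eq_zero <| by
    rw [nsmul_sub, ← hx, addOrderOf_nsmul_eq_zero, hx, ← hx', addOrderOf_nsmul_eq_zero, sub_zero]
  have hdvd_r : addOrderOf (x - x') ∣ r := addOrderOf_dvd_of_nsmul_eq_zero <| by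
    rw [hdiff, nsmul_sub, ← hy, addOrderOf_nsmul_eq_zero, hy, ← hy', addOrderOf_nsmul_eq_zero,
      sub_zero]
  have hx_eq : x = x' := sub_eq_zero.mp <| AddMonoid.addOrderOf_eq_one_iff.mp <|
    (h.coprime_dvd_left hdvd_q).eq_one_of_dvd hdvd_r
  exact Prod.ext hx_eq (add_left_cancel (hx_eq ▸ hsum))

theorem surjOn_add_addOrderOf_eq_prod (h : q.Coprime r) :
    Set.SurjOn (fun p : G × G => p.1 + p.2) ({x | addOrderOf x = q} ×ˢ {y | addOrderOf y = r})
      {z | addOrderOf z = q * r} := by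
  intro z (hz : addOrderOf z = q * r)
  obtain ⟨a, b, hab⟩ := Nat.isCoprime_iff_coprime.mpr h
  set x := (b * r) • z
  set y := (a * q) • z
  have hxy : x + y = z := by rw [← add_zsmul, add_comm, hab, one_zsmul]
  have hx : addOrderOf x ∣ q := addOrderOf_dvd_of_nsmul_eq_zero <| by
    rw [← natCast_zsmul, smul_smul, show (q : ℤ) * (b * r) = b * (q * r : ℕ) by push_cast; ring,
      mul_smul, natCast_zsmul, ← hz, addOrderOf_nsmul_eq_zero, smul_zero]
  have hy : addOrderOf y ∣ r := addOrderOf_dvd_of_nsmul_eq_zero <| by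
    rw [← natCast_zsmul, smul_smul, show (r : ℤ) * (a * q) = a * (q * r : ℕ) by push_cast; ring,
      mul_smul, natCast_zsmul, ← hz, addOrderOf_nsmul_eq_zero, smul_zero]
  have hmul : addOrderOf x * addOrderOf y = q * r := by
    rw [← (AddCommute.all x y).addOrderOf_add_eq_mul_addOrderOf_of_coprime
      ((h.coprime_dvd_left hx).coprime_dvd_right hy), hxy, hz]
  refine ⟨(x, y), ⟨?_, ?_⟩, hxy⟩
  · refine Nat.dvd_antisymm hx (Nat.Coprime.dvd_of_dvd_mul_right (h.coprime_dvd_right hy) ?_)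
    exact hmul ▸ dvd_mul_right q r
  · refine Nat.dvd_antisymm hy (Nat.Coprime.dvd_of_dvd_mul_left (h.symm.coprime_dvd_right hx) ?_)
    exact hmul ▸ dvd_mul_left r q

theorem bijOn_add_addOrderOf_eq_prod (h : q.Coprime r) :
    Set.BijOn (fun p : G × G => p.1 + p.2) ({x | addOrderOf x = q} ×ˢ {y | addOrderOf y = r})
      {z | addOrderOf z = q * r} := by
  refine ⟨?_, injOn_add_addOrderOf_eq_prod h, surjOn_add_addOrderOf_eq_prod h⟩
  rintro ⟨x, y⟩ ⟨hx : addOrderOf x = q, hy : addOrderOf y = r⟩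
  rw [Set.mem_ofPred_eq, (AddCommute.all x y).addOrderOf_add_eq_mul_addOrderOf_of_coprime
    (hx ▸ hy ▸ h), hx, hy]

end CoprimeOrders

theorem F_eq_sum_addOrderOf_eq {n : ℕ} (hn : 0 < n) :
    F n = ∑ x ∈ (AddCircle.finite_setOfPred_addOrderOf_eq 1 hn).toFinset,
      AddMonoidAlgebra.single x 1 := by
  have hcoe (a : ℕ) :
      ((a / n : ℚ) : AddCircle (1 : ℚ)) = a • ((1 / n : ℚ) : AddCircle (1 : ℚ)) := by
    simpa using AddCircle.natCast_div_mul_eq_nsmul (1 : ℚ) (n : ℚ) 1 a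
  refine Finset.sum_nbij (fun a => ((a / n : ℚ) : AddCircle (1 : ℚ))) ?_ ?_ ?_ fun _ _ => rfl
  · intro a ha
    rw [Finset.mem_filter] at ha
    simpa using AddCircle.addOrderOf_div_of_gcd_eq_one (p := (1 : ℚ)) hn ha.2
  · intro a ha b hb hab
    simp only [Finset.coe_filter, Finset.mem_range, Set.mem_ofPred_eq, hcoe] at ha hb hab
    have hord : addOrderOf ((1 / n : ℚ) : AddCircle (1 : ℚ)) = n :=
      AddCircle.addOrderOf_period_div hn
    exact nsmul_injOn_Iio_addOrderOf (hord.symm ▸ ha.1) (hord.symm ▸ hb.1) hab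
  · intro x hx
    simp only [Set.Finite.coe_toFinset, Set.mem_ofPred_eq] at hx
    obtain ⟨m, hm, hgcd, rfl⟩ := (AddCircle.addOrderOf_eq_pos_iff hn).mp hx
    exact ⟨m, by simpa using ⟨hm, hgcd⟩, by simp⟩

theorem stmt_1 (q r : ℕ) (hq : 0 < q) (hr : 0 < r) (h : Nat.Coprime q r) :
    F q * F r = F (q * r) := by
  rw [F_eq_sum_addOrderOf_eq hq, F_eq_sum_addOrderOf_eq hr, F_eq_sum_addOrderOf_eq (mul_pos hq hr),
    Finset.sum_mul_sum, ← Finset.sum_product']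
  have hbij := bijOn_add_addOrderOf_eq_prod (G := AddCircle (1 : ℚ)) h
  refine Finset.sum_nbij (fun p => p.1 + p.2) (fun p hp => ?_) ?_ ?_ fun p _ => ?_
  · simpa using hbij.mapsTo (by simpa using hp)
  · simpa using hbij.injOn
  · simpa using hbij.surjOn
  · simp only [AddMonoidAlgebra.single_mul_single, mul_one]
end

section
/- Let p be prime and α < β positive integers. Then in the group ring ℤ[ℚ/ℤ], F_{p^α} · F_{p^β} = φ(p^α) · F_{p^β}, where φ is Euler's totient function. -/
open Finset AddMonoidAlgebra

theorem IsNilpotent.isUnit_add_left_iff {R : Type*} [CommRing R] {c x : R} (hc : IsNilpotent c) :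
    IsUnit (c + x) ↔ IsUnit x :=
  ⟨fun h ↦ by simpa using hc.neg.isUnit_add_right_of_commute h (Commute.all _ _),
    fun h ↦ hc.isUnit_add_right_of_commute h (Commute.all _ _)⟩

theorem AddMonoidAlgebra.single_mul_sum_single_of_add_mem_iff {k A G : Type*} [Semiring k]
    [AddGroup A] [AddMonoid G] (f : A →+ G) (S : Finset A) {c : A}
    (hc : ∀ x, c + x ∈ S ↔ x ∈ S) :
    single (f c) (1 : k) * ∑ x ∈ S, single (f x) 1 = ∑ x ∈ S, single (f x) 1 := by
  simp_rw [mul_sum, single_mul_single, one_mul, ← map_add]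
  exact sum_equiv (Equiv.addLeft c) (fun x ↦ (hc x).symm) fun _ _ ↦ rfl

namespace ZMod

theorem isNilpotent_natCast_self (p β : ℕ) : IsNilpotent (p : ZMod (p ^ β)) :=
  ⟨β, by rw [← Nat.cast_pow, natCast_self]⟩

variable {N : ℕ} [NeZero N]

noncomputable def toRatAddCircle : ZMod N →+ AddCircle (1 : ℚ) :=
  lift N ⟨AddMonoidHom.mk' (fun j ↦ ↑(j / N : ℚ)) (by simp [add_div]), by simp⟩

theorem toRatAddCircle_natCast (j : ℕ) : toRatAddCircle (j : ZMod N) = ↑(j / N : ℚ) := by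
  rw [← Int.cast_natCast, toRatAddCircle, lift_coe]
  simp

end ZMod

theorem F_eq_sum_isUnit (N : ℕ) [NeZero N] :
    F N = ∑ x : ZMod N with IsUnit x, single (ZMod.toRatAddCircle x) 1 := by
  refine sum_nbij' (↑) ZMod.val (fun a ha ↦ ?_) (fun x hx ↦ ?_) (fun a ha ↦ ?_)
    (fun x _ ↦ ZMod.natCast_zmod_val x) (fun a _ ↦ by rw [ZMod.toRatAddCircle_natCast])
  · simp only [mem_filter, mem_range, mem_univ, true_and] at ha ⊢
    exact (ZMod.isUnit_iff_coprime a N).2 ha.2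
  · simp only [mem_filter, mem_range, mem_univ, true_and] at hx ⊢
    refine ⟨ZMod.val_lt x, (ZMod.isUnit_iff_coprime _ N).1 ?_⟩
    rwa [ZMod.natCast_zmod_val]
  · exact ZMod.val_natCast_of_lt (mem_range.1 (mem_filter.1 ha).1)

theorem single_div_pow_mul_F_pow_of_lt {p α β : ℕ} (hp : p ≠ 0) (hαβ : α < β) (a : ℕ) :
    single (((a : ℚ) / (p ^ α : ℕ) : ℚ) : AddCircle (1 : ℚ)) 1 * F (p ^ β) = F (p ^ β) := by
  have : NeZero (p ^ β) := ⟨pow_ne_zero _ hp⟩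
  have hcoe : (((a : ℚ) / (p ^ α : ℕ) : ℚ) : AddCircle (1 : ℚ)) =
      ZMod.toRatAddCircle ((p ^ (β - α) * a : ℕ) : ZMod (p ^ β)) := by
    rw [ZMod.toRatAddCircle_natCast, ← Nat.add_sub_cancel' hαβ.le, Nat.add_sub_cancel_left]
    push_cast
    rw [pow_add, mul_comm _ (a : ℚ), mul_div_mul_right _ _ (by simp [hp])]
  have hnil : IsNilpotent ((p ^ (β - α) * a : ℕ) : ZMod (p ^ β)) := by
    push_cast
    exact (Commute.all _ _).isNilpotent_mul_right
      ((ZMod.isNilpotent_natCast_self p β).pow_of_pos (Nat.sub_ne_zero_of_lt hαβ))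
  rw [hcoe, F_eq_sum_isUnit]
  exact single_mul_sum_single_of_add_mem_iff _ _ fun x ↦ by simpa using hnil.isUnit_add_left_iff

theorem stmt_2_general (p : ℕ) (hp : p.Prime) (α β : ℕ) (hαβ : α < β) :
    F (p ^ α) * F (p ^ β) = (Nat.totient (p ^ α) : ℤ) • F (p ^ β) := by
  rw [F, sum_mul, sum_congr rfl fun a _ ↦ single_div_pow_mul_F_pow_of_lt hp.ne_zero hαβ a,
    sum_const, Nat.totient_eq_card_coprime, natCast_zsmul]
  simp_rw [Nat.coprime_comm]

theorem stmt_2 (p : ℕ) (hp : p.Prime) (α β : ℕ) (hα : 0 < α) (hαβ : α < β) :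
    F (p ^ α) * F (p ^ β) = (Nat.totient (p ^ α) : ℤ) • F (p ^ β) :=
  stmt_2_general p hp α β hαβ
end

section
/- Let q and r be positive integers, d = gcd(q, r), and suppose that the largest divisor of d coprime to both q/d and r/d equals 1 (i.e., every prime dividing d also divides q/d or r/d). Then in the group ring ℤ[ℚ/ℤ], F_q · F_r = φ(d) · F_{qr/d}. -/
open Finset AddMonoidAlgebra
open scoped Nat

namespace Nat

theorem totient_mul_totient_eq_totient_gcd_mul_totient_lcm (a b : ℕ) :
    φ a * φ b = φ (a.gcd b) * φ (a.lcm b) := by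
  rcases (a.gcd b).eq_zero_or_pos with hd | hd
  · obtain ⟨rfl, rfl⟩ := Nat.gcd_eq_zero_iff.mp hd
    simp
  have hgcd : (a.gcd b).gcd (a.lcm b) = a.gcd b :=
    Nat.gcd_eq_left ((Nat.gcd_dvd_left a b).trans (Nat.dvd_lcm_left a b))
  have h₁ := totient_gcd_mul_totient_mul a b
  have h₂ := totient_gcd_mul_totient_mul (a.gcd b) (a.lcm b)
  rw [hgcd, Nat.gcd_mul_lcm] at h₂
  rw [h₂] at h₁
  exact (Nat.eq_of_mul_eq_mul_right hd h₁).symm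

theorem dvd_lcm_div_of_dvd_div_gcd {ℓ q r : ℕ} (h : ℓ ∣ r / q.gcd r) : q ∣ q.lcm r / ℓ := by
  rw [Nat.lcm, Nat.mul_div_assoc q (Nat.gcd_dvd_right q r), Nat.mul_div_assoc q h]
  exact Nat.dvd_mul_right q _

theorem dvd_lcm_div_or_dvd_lcm_div {q r : ℕ}
    (h : ∀ ℓ : ℕ, ℓ.Prime → ℓ ∣ q.gcd r → ℓ ∣ q / q.gcd r ∨ ℓ ∣ r / q.gcd r)
    {ℓ : ℕ} (hℓ : ℓ.Prime) (hℓqr : ℓ ∣ q.lcm r) : q ∣ q.lcm r / ℓ ∨ r ∣ q.lcm r / ℓ := by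
  suffices ℓ ∣ q / q.gcd r ∨ ℓ ∣ r / q.gcd r by
    rcases this with hq | hr
    · exact .inr (Nat.lcm_comm q r ▸ dvd_lcm_div_of_dvd_div_gcd (Nat.gcd_comm q r ▸ hq))
    · exact .inl (dvd_lcm_div_of_dvd_div_gcd hr)
  have hlcm : q.lcm r = q.gcd r * (q / q.gcd r) * (r / q.gcd r) := by
    rw [Nat.mul_div_cancel' (Nat.gcd_dvd_left q r), Nat.lcm,
      Nat.mul_div_assoc q (Nat.gcd_dvd_right q r)]
  rw [hlcm, hℓ.dvd_mul, hℓ.dvd_mul] at hℓqr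
  rcases hℓqr with (hd | hq) | hr
  exacts [h ℓ hℓ hd, .inl hq, .inr hr]

end Nat

theorem addOrderOf_add_eq_lcm {G : Type*} [AddCommMonoid G] {x y : G}
    (hx : 0 < addOrderOf x) (hy : 0 < addOrderOf y)
    (h : ∀ ℓ : ℕ, ℓ.Prime → ℓ ∣ (addOrderOf x).lcm (addOrderOf y) →
      addOrderOf x ∣ (addOrderOf x).lcm (addOrderOf y) / ℓ ∨
        addOrderOf y ∣ (addOrderOf x).lcm (addOrderOf y) / ℓ) :
    addOrderOf (x + y) = (addOrderOf x).lcm (addOrderOf y) := by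
  set m := (addOrderOf x).lcm (addOrderOf y)
  have hm : 0 < m := Nat.lcm_pos hx hy
  refine addOrderOf_eq_of_nsmul_and_div_prime_nsmul hm ?_ fun ℓ hℓ hℓm hsum => ?_
  · exact addOrderOf_dvd_iff_nsmul_eq_zero.mp (AddCommute.all x y).addOrderOf_add_dvd_lcm
  have hlt : m / ℓ < m := Nat.div_lt_self hm hℓ.one_lt
  have hpos : 0 < m / ℓ := Nat.div_pos (Nat.le_of_dvd hm hℓm) hℓ.pos
  rw [nsmul_add] at hsum
  suffices addOrderOf x ∣ m / ℓ ∧ addOrderOf y ∣ m / ℓ from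
    hlt.not_ge (Nat.le_of_dvd hpos (Nat.lcm_dvd this.1 this.2))
  simp only [addOrderOf_dvd_iff_nsmul_eq_zero]
  rcases h ℓ hℓ hℓm with hdx | hdy
  · rw [addOrderOf_dvd_iff_nsmul_eq_zero.mp hdx, zero_add] at hsum
    exact ⟨addOrderOf_dvd_iff_nsmul_eq_zero.mp hdx, hsum⟩
  · rw [addOrderOf_dvd_iff_nsmul_eq_zero.mp hdy, add_zero] at hsum
    exact ⟨hsum, addOrderOf_dvd_iff_nsmul_eq_zero.mp hdy⟩

theorem injOn_nsmul_of_coprime {G : Type*} [AddCommGroup G] {k m : ℕ} (hk : k.Coprime m) :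
    Set.InjOn (k • · : G → G) {x | addOrderOf x ∣ m} := by
  intro x hx x' hx' hxx'
  have hk' : addOrderOf (x - x') ∣ k := by
    rw [addOrderOf_dvd_iff_nsmul_eq_zero, nsmul_sub, sub_eq_zero]
    exact hxx'
  have hm : addOrderOf (x - x') ∣ m := by
    rw [addOrderOf_dvd_iff_nsmul_eq_zero, nsmul_sub,
      addOrderOf_dvd_iff_nsmul_eq_zero.mp hx, addOrderOf_dvd_iff_nsmul_eq_zero.mp hx', sub_zero]
  rw [← sub_eq_zero, ← AddMonoid.addOrderOf_eq_one_iff]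
  exact Nat.eq_one_of_dvd_coprimes hk hk' hm

theorem AddMonoidAlgebra.sum_single_mul_sum_single {R G : Type*} [Semiring R] [AddCommMonoid G]
    [DecidableEq G] {s t u : Finset G} (h : ∀ x ∈ s, ∀ y ∈ t, x + y ∈ u) :
    (∑ x ∈ s, single x (1 : R)) * (∑ y ∈ t, single y 1) =
      ∑ z ∈ u, #{xy ∈ s ×ˢ t | xy.1 + xy.2 = z} • single z 1 := by
  rw [sum_mul_sum, ← sum_product']
  simp only [single_mul_single, mul_one]
  rw [← sum_fiberwise_of_maps_to (g := fun xy : G × G => xy.1 + xy.2) (fun xy hxy => ?_)]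
  · refine sum_congr rfl fun z _ => ?_
    rw [← sum_const]
    exact sum_congr rfl fun xy hxy => by rw [(mem_filter.mp hxy).2]
  · rw [mem_product] at hxy
    exact h _ hxy.1 _ hxy.2

namespace AddCircle

variable {𝕜 : Type*} [Field 𝕜] [LinearOrder 𝕜] [IsStrictOrderedRing 𝕜] (p : 𝕜) [Fact (0 < p)]

noncomputable def pointsOfOrder (n : ℕ) : Finset (AddCircle p) :=
  ((range n).filter (·.Coprime n)).image fun a : ℕ => ↑((a : 𝕜) / n * p)

theorem injOn_coe_div_mul (n : ℕ) :
    Set.InjOn (fun a : ℕ => (↑((a : 𝕜) / n * p) : AddCircle p))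
      ((range n).filter (·.Coprime n)) := by
  intro a ha b hb hab
  simp only [coe_filter, mem_range, Set.mem_ofPred_eq] at ha hb
  have hn : 0 < n := (Nat.zero_le a).trans_lt ha.1
  simp only [natCast_div_mul_eq_nsmul] at hab
  refine nsmul_injOn_Iio_addOrderOf ?_ ?_ hab <;> rw [Set.mem_Iio, addOrderOf_period_div hn]
  exacts [ha.1, hb.1]

variable {p}

theorem mem_pointsOfOrder {n : ℕ} (hn : 0 < n) {u : AddCircle p} :
    u ∈ pointsOfOrder p n ↔ addOrderOf u = n := by
  simp only [pointsOfOrder, mem_image, mem_filter, mem_range, addOrderOf_eq_pos_iff hn, and_assoc,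
    Nat.coprime_iff_gcd_eq_one]

theorem card_pointsOfOrder (n : ℕ) : #(pointsOfOrder p n) = φ n := by
  rw [pointsOfOrder, card_image_of_injOn (injOn_coe_div_mul p n), Nat.totient]
  simp only [Nat.coprime_comm]

theorem exists_coprime_nsmul_eq {m : ℕ} (hm : 0 < m) {u v : AddCircle p}
    (hu : addOrderOf u = m) (hv : addOrderOf v = m) : ∃ k : ℕ, k.Coprime m ∧ k • u = v := by
  have : NeZero m := ⟨hm.ne'⟩
  obtain ⟨a, -, ha, rfl⟩ := (addOrderOf_eq_pos_iff hm).mp hu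
  obtain ⟨b, -, hb, rfl⟩ := (addOrderOf_eq_pos_iff hm).mp hv
  let w := ZMod.unitOfCoprime b hb * (ZMod.unitOfCoprime a ha)⁻¹
  refine ⟨(w : ZMod m).val, ZMod.val_coe_unit_coprime w, ?_⟩
  rw [natCast_div_mul_eq_nsmul, natCast_div_mul_eq_nsmul, smul_smul, nsmul_eq_nsmul_iff_modEq,
    addOrderOf_period_div hm, ← ZMod.natCast_eq_natCast_iff, Nat.cast_mul, ZMod.natCast_zmod_val,
    ← ZMod.coe_unitOfCoprime a ha, ← ZMod.coe_unitOfCoprime b hb, ← Units.val_mul,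
    inv_mul_cancel_right]

section Fiber

variable {q r : ℕ}

theorem add_mem_pointsOfOrder_lcm (hq : 0 < q) (hr : 0 < r)
    (h : ∀ ℓ : ℕ, ℓ.Prime → ℓ ∣ q.gcd r → ℓ ∣ q / q.gcd r ∨ ℓ ∣ r / q.gcd r)
    {x y : AddCircle p} (hx : x ∈ pointsOfOrder p q) (hy : y ∈ pointsOfOrder p r) :
    x + y ∈ pointsOfOrder p (q.lcm r) := by
  rw [mem_pointsOfOrder hq] at hx
  rw [mem_pointsOfOrder hr] at hy
  subst hx hy
  rw [mem_pointsOfOrder (Nat.lcm_pos hq hr)]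
  exact addOrderOf_add_eq_lcm hq hr fun ℓ => Nat.dvd_lcm_div_or_dvd_lcm_div h

variable [DecidableEq (AddCircle p)]

theorem card_fiber_le (hq : 0 < q) (hr : 0 < r) {z z' : AddCircle p}
    (hz : z ∈ pointsOfOrder p (q.lcm r)) (hz' : z' ∈ pointsOfOrder p (q.lcm r)) :
    #{xy ∈ pointsOfOrder p q ×ˢ pointsOfOrder p r | xy.1 + xy.2 = z} ≤
      #{xy ∈ pointsOfOrder p q ×ˢ pointsOfOrder p r | xy.1 + xy.2 = z'} := by
  have hm := Nat.lcm_pos hq hr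
  rw [mem_pointsOfOrder hm] at hz hz'
  obtain ⟨k, hk, rfl⟩ := exists_coprime_nsmul_eq hm hz hz'
  have hord {n : ℕ} (hn : n ∣ q.lcm r) {x : AddCircle p} (hx : addOrderOf x = n) :
      addOrderOf (k • x) = n := by
    rw [Nat.Coprime.addOrderOf_nsmul (hx ▸ (hk.coprime_dvd_right hn).symm), hx]
  refine card_le_card_of_injOn (fun xy => (k • xy.1, k • xy.2)) ?_ ?_
  · rintro ⟨x, y⟩ hxy
    simp only [coe_filter, mem_product, mem_pointsOfOrder hq, mem_pointsOfOrder hr,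
      Set.mem_ofPred_eq] at hxy ⊢
    obtain ⟨⟨hx, hy⟩, rfl⟩ := hxy
    exact ⟨⟨hord (Nat.dvd_lcm_left q r) hx, hord (Nat.dvd_lcm_right q r) hy⟩,
      (nsmul_add x y k).symm⟩
  · rintro ⟨x, y⟩ hxy ⟨x', y'⟩ hxy' h
    simp only [coe_filter, mem_product, mem_pointsOfOrder hq, mem_pointsOfOrder hr,
      Set.mem_ofPred_eq] at hxy hxy'
    obtain ⟨hkx, hky⟩ := Prod.mk.inj h
    have hinj := injOn_nsmul_of_coprime (G := AddCircle p) hk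
    exact Prod.ext
      (hinj (hxy.1.1 ▸ Nat.dvd_lcm_left q r) (hxy'.1.1 ▸ Nat.dvd_lcm_left q r) hkx)
      (hinj (hxy.1.2 ▸ Nat.dvd_lcm_right q r) (hxy'.1.2 ▸ Nat.dvd_lcm_right q r) hky)

theorem card_fiber_eq_totient_gcd (hq : 0 < q) (hr : 0 < r)
    (h : ∀ ℓ : ℕ, ℓ.Prime → ℓ ∣ q.gcd r → ℓ ∣ q / q.gcd r ∨ ℓ ∣ r / q.gcd r)
    {z : AddCircle p} (hz : z ∈ pointsOfOrder p (q.lcm r)) :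
    #{xy ∈ pointsOfOrder p q ×ˢ pointsOfOrder p r | xy.1 + xy.2 = z} = φ (q.gcd r) := by
  have hcount := card_eq_sum_card_fiberwise (t := pointsOfOrder p (q.lcm r))
    (f := fun xy : AddCircle p × AddCircle p => xy.1 + xy.2) fun xy hxy => by
      rw [coe_product, Set.mem_prod] at hxy
      exact add_mem_pointsOfOrder_lcm hq hr h hxy.1 hxy.2
  have hconst : ∀ z' ∈ pointsOfOrder p (q.lcm r),
      #{xy ∈ pointsOfOrder p q ×ˢ pointsOfOrder p r | xy.1 + xy.2 = z'} =
        #{xy ∈ pointsOfOrder p q ×ˢ pointsOfOrder p r | xy.1 + xy.2 = z} := fun z' hz' =>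
    le_antisymm (card_fiber_le hq hr hz' hz) (card_fiber_le hq hr hz hz')
  rw [sum_congr rfl hconst, sum_const, card_product, card_pointsOfOrder, card_pointsOfOrder,
    card_pointsOfOrder, smul_eq_mul, Nat.totient_mul_totient_eq_totient_gcd_mul_totient_lcm,
    mul_comm] at hcount
  exact (Nat.eq_of_mul_eq_mul_left (Nat.totient_pos.mpr (Nat.lcm_pos hq hr)) hcount).symm

end Fiber

end AddCircle

theorem F_eq_sum_pointsOfOrder (n : ℕ) :
    F n = ∑ x ∈ AddCircle.pointsOfOrder 1 n, single x 1 := by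
  rw [AddCircle.pointsOfOrder, sum_image (AddCircle.injOn_coe_div_mul 1 n)]
  simp only [mul_one]
  rfl

theorem stmt_4 (q r : ℕ) (hq : 0 < q) (hr : 0 < r)
    (h : ∀ p : ℕ, p.Prime → p ∣ Nat.gcd q r →
      p ∣ q / Nat.gcd q r ∨ p ∣ r / Nat.gcd q r) :
    F q * F r = (Nat.totient (Nat.gcd q r) : ℤ) • F (q * r / Nat.gcd q r) := by
  classical
  change F q * F r = _ • F (q.lcm r)
  rw [F_eq_sum_pointsOfOrder, F_eq_sum_pointsOfOrder, F_eq_sum_pointsOfOrder,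
    sum_single_mul_sum_single fun x hx y hy => AddCircle.add_mem_pointsOfOrder_lcm hq hr h hx hy,
    smul_sum]
  refine sum_congr rfl fun z hz => ?_
  rw [AddCircle.card_fiber_eq_totient_gcd hq hr h hz, natCast_zsmul]
end

section
/- Let Q and k be positive integers and let F_Q = {β ∈ ℚ/ℤ : ord(β) ≤ Q}. Then the k-fold sumset F_Q + ⋯ + F_Q equals the set of all β ∈ ℚ/ℤ such that ord(β) = n₁·n₂⋯n_k for some positive integers n₁, …, n_k ≤ Q that are pairwise coprime. -/
/-!
The order of a sum of `k` elements divides the lcm of their orders, and every divisor of an lcm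
of `k` numbers splits into `k` pairwise coprime factors, the `i`-th dividing the `i`-th number
(split `lcm a b` into the primes where `a` wins and the primes where `b` wins); this gives the
factorisation of the order. Conversely, if `ord β = N = n₁ ⋯ n_k` with the `nᵢ` pairwise coprime,
then the cofactors `N / nᵢ` generate the unit ideal of `ℤ`, and a Bézout relation
`∑ μᵢ N / nᵢ = 1` writes `β` as the sum of the elements `μᵢ (N / nᵢ) β`, of order dividing `nᵢ`.
-/

open Finset Function

namespace Nat

theorem exists_coprime_mul_eq_of_dvd_lcm {m a b : ℕ} (h : m ∣ a.lcm b) :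
    ∃ u v, u ∣ a ∧ v ∣ b ∧ u.Coprime v ∧ u * v = m := by
  rcases eq_or_ne a 0 with rfl | ha
  · exact ⟨m, 1, dvd_zero m, one_dvd b, coprime_one_right m, mul_one m⟩
  rcases eq_or_ne b 0 with rfl | hb
  · exact ⟨1, m, one_dvd a, dvd_zero m, coprime_one_left m, one_mul m⟩
  have hLR := coprime_factorizationLCMLeft_factorizationLCMRight a b
  refine ⟨m.gcd (factorizationLCMLeft a b), m.gcd (factorizationLCMRight a b),
    (gcd_dvd_right _ _).trans (factorizationLCMLeft_dvd_left a b),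
    (gcd_dvd_right _ _).trans (factorizationLCMRight_dvd_right a b), hLR.gcd_both m m, ?_⟩
  rw [← hLR.gcd_mul m, factorizationLCMLeft_mul_factorizationLCMRight ha hb, gcd_eq_left h]

theorem exists_pairwise_coprime_prod_eq_of_dvd_lcm {ι : Type*} [DecidableEq ι] (a : ι → ℕ)
    (s : Finset ι) {m : ℕ} (h : m ∣ s.lcm a) :
    ∃ n : ι → ℕ, (∀ i ∈ s, n i ∣ a i) ∧ (s : Set ι).Pairwise (Coprime on n) ∧
      ∏ i ∈ s, n i = m := by
  induction s using Finset.induction_on generalizing m with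
  | empty => exact ⟨fun _ ↦ 1, by simp, by simp, by simpa using (Nat.dvd_one.mp h).symm⟩
  | @insert i s hi ih =>
    rw [lcm_insert, lcm_eq_nat_lcm] at h
    obtain ⟨u, v, hu, hv, huv, rfl⟩ := exists_coprime_mul_eq_of_dvd_lcm h
    obtain ⟨n, hna, hn, rfl⟩ := ih hv
    have hn_of_mem {j : ι} (hj : j ∈ s) : update n i u j = n j :=
      update_of_ne (ne_of_mem_of_not_mem hj hi) u n
    refine ⟨update n i u, ?_, ?_, ?_⟩
    · simp only [mem_insert, forall_eq_or_imp, update_self]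
      exact ⟨hu, fun j hj ↦ (hn_of_mem hj).symm ▸ hna j hj⟩
    · have hu_coprime {j : ι} (hj : j ∈ s) : u.Coprime (n j) :=
        huv.coprime_dvd_right (dvd_prod_of_mem n hj)
      rw [coe_insert, Set.pairwise_insert]
      refine ⟨fun j hj l hl hjl ↦ ?_, fun j hj _ ↦ ?_⟩
      · simpa only [onFun, hn_of_mem hj, hn_of_mem hl] using hn hj hl hjl
      · simp only [onFun, update_self, hn_of_mem hj]
        exact ⟨hu_coprime hj, (hu_coprime hj).symm⟩
    · rw [prod_insert hi, update_self, prod_congr rfl fun j hj ↦ hn_of_mem hj]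

end Nat

@[to_additive]
theorem orderOf_prod_dvd_lcm {G ι : Type*} [CommMonoid G] (s : Finset ι) (f : ι → G) :
    orderOf (∏ i ∈ s, f i) ∣ s.lcm fun i ↦ orderOf (f i) := by
  refine orderOf_dvd_of_pow_eq_one ?_
  rw [← prod_pow]
  exact prod_eq_one fun i hi ↦ orderOf_dvd_iff_pow_eq_one.mp (dvd_lcm hi)

theorem exists_sum_eq_of_prod_nsmul_eq_zero {G ι : Type*} [AddCommGroup G] [Fintype ι]
    [DecidableEq ι] {n : ι → ℕ} (hn : Pairwise (Nat.Coprime on n)) {x : G}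
    (hx : (∏ i, n i) • x = 0) : ∃ y : ι → G, (∀ i, n i • y i = 0) ∧ ∑ i, y i = x := by
  cases isEmpty_or_nonempty ι
  · exact ⟨0, fun i ↦ isEmptyElim i, by simpa using hx.symm⟩
  obtain ⟨μ, hμ⟩ := (exists_sum_eq_one_iff_pairwise_coprime' (s := fun i ↦ (n i : ℤ))).mpr
    fun i j hij ↦ Nat.isCoprime_iff_coprime.mpr (hn hij)
  refine ⟨fun i ↦ (μ i * ∏ j ∈ {i}ᶜ, (n j : ℤ)) • x, fun i ↦ ?_, ?_⟩
  · have hprod : (n i : ℤ) * (μ i * ∏ j ∈ {i}ᶜ, (n j : ℤ)) = μ i * ((∏ j, n j : ℕ) : ℤ) := by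
      rw [mul_left_comm, Nat.cast_prod, Fintype.prod_eq_mul_prod_compl i]
    rw [← natCast_zsmul, smul_smul, hprod, mul_smul, natCast_zsmul, hx, smul_zero]
  · rw [← sum_smul, hμ, one_smul]

theorem AddCircle.addOrderOf_pos_of_rat {p : ℚ} [Fact (0 < p)] (u : AddCircle p) :
    0 < addOrderOf u := by
  induction u using QuotientAddGroup.induction_on with
  | H q =>
    have hord := AddCircle.addOrderOf_coe_rat (p := p) (q := q / p)
    rw [Rat.cast_id, div_mul_cancel₀ q (Fact.out : 0 < p).ne'] at hord
    exact hord ▸ (q / p).pos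

theorem stmt_10_general (Q k : ℕ) :
    {β : AddCircle (1 : ℚ) | ∃ f : Fin k → AddCircle (1 : ℚ),
        (∀ i, addOrderOf (f i) ≤ Q) ∧ β = ∑ i, f i}
      = {β : AddCircle (1 : ℚ) | ∃ n : Fin k → ℕ,
          (∀ i, 0 < n i ∧ n i ≤ Q) ∧
          (∀ i j, i ≠ j → Nat.Coprime (n i) (n j)) ∧
          addOrderOf β = ∏ i, n i} := by
  ext β
  constructor
  · rintro ⟨f, hf, rfl⟩
    obtain ⟨n, hdvd, hcop, hprod⟩ := Nat.exists_pairwise_coprime_prod_eq_of_dvd_lcm _ univ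
      (addOrderOf_sum_dvd_lcm univ f)
    refine ⟨n, fun i ↦ ⟨?_, ?_⟩, fun i j hij ↦ hcop (mem_univ i) (mem_univ j) hij, hprod.symm⟩
    · exact Nat.pos_of_dvd_of_pos (hdvd i (mem_univ i)) (AddCircle.addOrderOf_pos_of_rat (f i))
    · exact (Nat.le_of_dvd (AddCircle.addOrderOf_pos_of_rat (f i)) (hdvd i (mem_univ i))).trans
        (hf i)
  · rintro ⟨n, hn, hcop, hord⟩
    obtain ⟨y, hy, rfl⟩ := exists_sum_eq_of_prod_nsmul_eq_zero (fun i j hij ↦ hcop i j hij)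
      (hord ▸ addOrderOf_nsmul_eq_zero β)
    exact ⟨y, fun i ↦ (Nat.le_of_dvd (hn i).1 (addOrderOf_dvd_of_nsmul_eq_zero (hy i))).trans
      (hn i).2, rfl⟩

theorem stmt_10 (Q k : ℕ) (hQ : 0 < Q) (hk : 0 < k) :
    {β : AddCircle (1 : ℚ) | ∃ f : Fin k → AddCircle (1 : ℚ),
        (∀ i, addOrderOf (f i) ≤ Q) ∧ β = ∑ i, f i}
      = {β : AddCircle (1 : ℚ) | ∃ n : Fin k → ℕ,
          (∀ i, 0 < n i ∧ n i ≤ Q) ∧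
          (∀ i j, i ≠ j → Nat.Coprime (n i) (n j)) ∧
          addOrderOf β = ∏ i, n i} :=
  stmt_10_general Q k
end

section
/- Let Q be a positive integer and F_Q = {β ∈ ℚ/ℤ : ord(β) ≤ Q}. Then F_Q + F_Q = {β ∈ ℚ/ℤ : ∃ m, n ≤ Q with gcd(m, n) = 1 and ord(β) = m·n}. -/
/-!
A sum of two elements of orders `a, b ≤ Q` has order dividing `lcm a b`. Splitting the prime
powers of `lcm a b` between `a` and `b` writes it as `M * N` with `M ∣ a`, `N ∣ b` coprime, and
every divisor of `M * N` splits accordingly. Conversely, if `β` has order `m * n` with `m, n`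
coprime, a Bézout relation `u m + v n = 1` splits `β = (v n) • β + (u m) • β` into elements of
orders dividing `m` and `n`.
-/

lemma Nat.exists_coprime_mul_eq_of_dvd_lcm_s11 {k a b : ℕ} (hk : k ∣ a.lcm b) :
    ∃ m n, m ∣ a ∧ n ∣ b ∧ m.Coprime n ∧ k = m * n := by
  rcases eq_or_ne a 0 with rfl | ha
  · exact ⟨k, 1, dvd_zero k, one_dvd b, Nat.coprime_one_right k, (mul_one k).symm⟩
  rcases eq_or_ne b 0 with rfl | hb
  · exact ⟨1, k, one_dvd a, dvd_zero k, Nat.coprime_one_left k, (one_mul k).symm⟩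
  rw [← Nat.factorizationLCMLeft_mul_factorizationLCMRight ha hb] at hk
  obtain ⟨m, n, hm, hn, rfl⟩ := exists_dvd_and_dvd_of_dvd_mul hk
  have hcop := Nat.coprime_factorizationLCMLeft_factorizationLCMRight a b
  exact ⟨m, n, hm.trans (Nat.factorizationLCMLeft_dvd_left a b),
    hn.trans (Nat.factorizationLCMRight_dvd_right a b),
    (hcop.coprime_dvd_left hm).coprime_dvd_right hn, rfl⟩

lemma exists_coprime_mul_eq_addOrderOf_add {G : Type*} [AddCommMonoid G] (a b : G) :
    ∃ m n, m ∣ addOrderOf a ∧ n ∣ addOrderOf b ∧ m.Coprime n ∧ addOrderOf (a + b) = m * n :=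
  Nat.exists_coprime_mul_eq_of_dvd_lcm_s11 (AddCommute.all a b).addOrderOf_add_dvd_lcm

lemma exists_add_eq_of_mul_nsmul_eq_zero {G : Type*} [AddGroup G] {β : G} {m n : ℕ}
    (hmn : m.Coprime n) (hβ : (m * n) • β = 0) :
    ∃ b₁ b₂ : G, addOrderOf b₁ ∣ m ∧ addOrderOf b₂ ∣ n ∧ β = b₁ + b₂ := by
  obtain ⟨u, v, huv⟩ := Nat.isCoprime_iff_coprime.mpr hmn
  have hβ' : ((m : ℤ) * n) • β = 0 := by exact_mod_cast hβ
  refine ⟨(v * n) • β, (u * m) • β, ?_, ?_, ?_⟩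
  · apply addOrderOf_dvd_of_nsmul_eq_zero
    rw [← natCast_zsmul, smul_smul, mul_left_comm, mul_smul, hβ', smul_zero]
  · apply addOrderOf_dvd_of_nsmul_eq_zero
    rw [← natCast_zsmul, smul_smul, mul_left_comm, mul_comm (n : ℤ), mul_smul, hβ', smul_zero]
  · rw [← add_zsmul, add_comm, huv, one_zsmul]

lemma AddCircle.isAddTorsion_rat (p : ℚ) [Fact (0 < p)] : IsAddTorsion (AddCircle p) := by
  intro x
  obtain ⟨a, rfl⟩ := QuotientAddGroup.mk_surjective x
  exact AddCircle.isOfFinAddOrder_iff_exists_rat_eq_div.mpr ⟨a / p, by simp⟩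

theorem stmt_11_general (Q : ℕ) :
    {β : AddCircle (1 : ℚ) | ∃ b₁ b₂ : AddCircle (1 : ℚ),
        addOrderOf b₁ ≤ Q ∧ addOrderOf b₂ ≤ Q ∧ β = b₁ + b₂}
      = {β : AddCircle (1 : ℚ) | ∃ m n : ℕ,
          0 < m ∧ 0 < n ∧ m ≤ Q ∧ n ≤ Q ∧ Nat.Coprime m n ∧ addOrderOf β = m * n} := by
  ext β
  constructor
  · rintro ⟨b₁, b₂, h₁, h₂, rfl⟩
    obtain ⟨m, n, hm, hn, hmn, hord⟩ := exists_coprime_mul_eq_addOrderOf_add b₁ b₂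
    have hb₁ := (AddCircle.isAddTorsion_rat 1 b₁).addOrderOf_pos
    have hb₂ := (AddCircle.isAddTorsion_rat 1 b₂).addOrderOf_pos
    exact ⟨m, n, Nat.pos_of_dvd_of_pos hm hb₁, Nat.pos_of_dvd_of_pos hn hb₂,
      (Nat.le_of_dvd hb₁ hm).trans h₁, (Nat.le_of_dvd hb₂ hn).trans h₂, hmn, hord⟩
  · rintro ⟨m, n, hm, hn, hmQ, hnQ, hmn, hord⟩
    obtain ⟨b₁, b₂, h₁, h₂, rfl⟩ :=
      exists_add_eq_of_mul_nsmul_eq_zero hmn (hord ▸ addOrderOf_nsmul_eq_zero β)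
    exact ⟨b₁, b₂, (Nat.le_of_dvd hm h₁).trans hmQ, (Nat.le_of_dvd hn h₂).trans hnQ, rfl⟩

theorem stmt_11 (Q : ℕ) (hQ : 0 < Q) :
    {β : AddCircle (1 : ℚ) | ∃ b₁ b₂ : AddCircle (1 : ℚ),
        addOrderOf b₁ ≤ Q ∧ addOrderOf b₂ ≤ Q ∧ β = b₁ + b₂}
      = {β : AddCircle (1 : ℚ) | ∃ m n : ℕ,
          0 < m ∧ 0 < n ∧ m ≤ Q ∧ n ≤ Q ∧ Nat.Coprime m n ∧ addOrderOf β = m * n} :=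
  stmt_11_general Q
end

section
/- Let Q be a positive integer with π(Q) ≤ k (π the prime-counting function). Then the k-fold sumset of F_Q = {β ∈ ℚ/ℤ : ord(β) ≤ Q} equals the subgroup G_Q = {β ∈ ℚ/ℤ : ord(β) divides lcm(1, …, Q)}. -/
/-!
Every element of ℚ/ℤ has finite order. If `ord β = n` divides `lcm(1, …, Q)`, split `β` along the
coprime factorization `n = ∏ p ^ vₚ(n)` into components of order dividing `p ^ vₚ(n)`; since
`vₚ(lcm(1, …, Q)) = ⌊log_p Q⌋`, each `p ^ vₚ(n)` is at most `Q`. There is one component per prime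
`p ≤ Q`, so at most `π(Q) ≤ k` of them, and padding with zeros gives `k` summands. Conversely,
every element of order at most `Q` has order dividing `lcm(1, …, Q)`, and these form a subgroup.
-/

open Finset
open scoped Function

theorem AddCircle.addOrderOf_pos_rat (β : AddCircle (1 : ℚ)) : 0 < addOrderOf β := by
  obtain ⟨q, rfl⟩ := QuotientAddGroup.mk_surjective β
  exact (AddCircle.isOfFinAddOrder_iff_exists_rat_eq_div.mpr ⟨q, by simp⟩).addOrderOf_pos

theorem Nat.ordProj_le_of_dvd_lcmUpto {n Q : ℕ} (p : ℕ) (hQ : Q ≠ 0) (hn : n ∣ Nat.lcmUpto Q) :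
    p ^ n.factorization p ≤ Q := by
  by_cases hp : p.Prime
  · have hv : n.factorization p ≤ p.log Q := by
      rw [← Nat.factorization_lcmUpto Q hp]
      exact (Nat.factorization_le_iff_dvd (ne_zero_of_dvd_ne_zero (Nat.lcmUpto_ne_zero Q) hn)
        (Nat.lcmUpto_ne_zero Q)).mpr hn p
    exact (Nat.pow_le_pow_right hp.pos hv).trans (Nat.pow_log_le_self p hQ)
  · simpa [Nat.factorization_eq_zero_of_not_prime n hp] using Nat.one_le_iff_ne_zero.mpr hQ

theorem Nat.primeFactors_subset_primesLE_of_dvd_lcmUpto {n Q : ℕ} (hn : n ∣ Nat.lcmUpto Q) :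
    n.primeFactors ⊆ Nat.primesLE Q :=
  Nat.primeFactors_lcmUpto Q ▸ Nat.primeFactors_mono hn (Nat.lcmUpto_ne_zero Q)

theorem exists_sum_primeFactors_eq_of_nsmul_eq_zero {M : Type*} [AddCommGroup M] {n : ℕ}
    (hn : n ≠ 0) {β : M} (hβ : n • β = 0) :
    ∃ f : ℕ → M, (∀ p, (p ^ n.factorization p) • f p = 0) ∧ ∑ p ∈ n.primeFactors, f p = β := by
  have hcop : (n.primeFactors : Set ℕ).Pairwise
      (IsCoprime on fun p => ((p ^ n.factorization p : ℕ) : ℤ)) := by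
    intro p hp q hq hpq
    exact Nat.isCoprime_iff_coprime.mpr <| Nat.coprime_pow_primes _ _
      (Nat.prime_of_mem_primeFactors hp) (Nat.prime_of_mem_primeFactors hq) hpq
  have hmem : β ∈ ⨆ p ∈ n.primeFactors,
      Submodule.torsionBy ℤ M ((p ^ n.factorization p : ℕ) : ℤ) := by
    rw [Submodule.iSup_torsionBy_eq_torsionBy_prod hcop, Submodule.mem_torsionBy_iff,
      ← Nat.cast_prod, ← Nat.prod_factorization_eq_prod_primeFactors,
      Nat.prod_factorization_pow_eq_self hn, natCast_zsmul, hβ]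
  obtain ⟨μ, hμ⟩ := (Submodule.mem_iSup_finset_iff_exists_sum _ β).mp hmem
  exact ⟨fun p => μ p, fun p => by
    have := (Submodule.mem_torsionBy_iff _ _).mp (μ p).2
    rwa [natCast_zsmul] at this, hμ⟩

theorem Finset.exists_fin_sum_eq_sum {ι M : Type*} [AddCommMonoid M] {P : M → Prop}
    {s : Finset ι} {k : ℕ} (hs : #s ≤ k) (f : ι → M) (h0 : P 0) (hf : ∀ i ∈ s, P (f i)) :
    ∃ g : Fin k → M, (∀ j, P (g j)) ∧ ∑ j, g j = ∑ i ∈ s, f i := by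
  classical
  obtain ⟨e⟩ : Nonempty (s ↪ Fin k) := Function.Embedding.nonempty_of_card_le (by simpa)
  let g := Function.extend e (fun i : s => f i) 0
  have hg : ∀ i : s, g (e i) = f i := fun i => e.injective.extend_apply _ _ i
  refine ⟨g, fun j => ?_, ?_⟩
  · by_cases hj : ∃ i, e i = j
    · obtain ⟨i, rfl⟩ := hj
      exact hg i ▸ hf i i.2
    · simpa [g, Function.extend_apply' _ _ _ hj] using h0
  · rw [← sum_subset (subset_univ (univ.map e)), sum_map, ← sum_coe_sort s]
    · simp only [hg]
    · intro j _ hj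
      simp only [Finset.mem_map, mem_univ, true_and, not_exists] at hj
      simp [g, Function.extend_apply' _ _ _ fun ⟨i, hi⟩ => hj i hi]

theorem stmt_18_general (Q k : ℕ) (hQ : 0 < Q)
    (hπ : ((Finset.range (Q + 1)).filter Nat.Prime).card ≤ k) :
    {β : AddCircle (1 : ℚ) | ∃ f : Fin k → AddCircle (1 : ℚ),
        (∀ i, addOrderOf (f i) ≤ Q) ∧ β = ∑ i, f i}
      = {β : AddCircle (1 : ℚ) | addOrderOf β ∣ (Finset.Icc 1 Q).lcm id} := by
  change _ = {β | addOrderOf β ∣ Nat.lcmUpto Q}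
  ext β
  simp only [Set.mem_ofPred_eq]
  constructor
  · rintro ⟨f, hf, rfl⟩
    rw [addOrderOf_dvd_iff_nsmul_eq_zero, Finset.smul_sum]
    refine Finset.sum_eq_zero fun i _ => addOrderOf_dvd_iff_nsmul_eq_zero.mp ?_
    exact Finset.dvd_lcm (Finset.mem_Icc.mpr ⟨AddCircle.addOrderOf_pos_rat _, hf i⟩)
  · intro hβ
    set n := addOrderOf β
    obtain ⟨f, hf, hfβ⟩ := exists_sum_primeFactors_eq_of_nsmul_eq_zero
      (AddCircle.addOrderOf_pos_rat β).ne' (addOrderOf_nsmul_eq_zero β)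
    have hsmall : ∀ p ∈ n.primeFactors, addOrderOf (f p) ≤ Q := fun p hp =>
      (addOrderOf_le_of_nsmul_eq_zero (pow_pos (Nat.prime_of_mem_primeFactors hp).pos _)
        (hf p)).trans (Nat.ordProj_le_of_dvd_lcmUpto p hQ.ne' hβ)
    have hcard : #n.primeFactors ≤ k :=
      (card_le_card (Nat.primeFactors_subset_primesLE_of_dvd_lcmUpto hβ)).trans hπ
    obtain ⟨g, hg, hsum⟩ := exists_fin_sum_eq_sum (P := fun x => addOrderOf x ≤ Q) hcard f
      (by rw [addOrderOf_zero]; exact hQ) hsmall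
    exact ⟨g, hg, hfβ ▸ hsum.symm⟩

theorem stmt_18 (Q k : ℕ) (hQ : 0 < Q) (hk : 0 < k)
    (hπ : ((Finset.range (Q + 1)).filter Nat.Prime).card ≤ k) :
    {β : AddCircle (1 : ℚ) | ∃ f : Fin k → AddCircle (1 : ℚ),
        (∀ i, addOrderOf (f i) ≤ Q) ∧ β = ∑ i, f i}
      = {β : AddCircle (1 : ℚ) | addOrderOf β ∣ (Finset.Icc 1 Q).lcm id} :=
  stmt_18_general Q k hQ hπ
end
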